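/- arXiv:2301.09135 — 2 statements merged into one kernel-verified Lean document; each statement's English description precedes it below -/
import Mathlib

section
/- Let K be a p-adic field with valuation v_p. Every bounded multiplicative semi-norm on the Tate algebra K⟨T⟩ restricts to a pseudo-valuation on K[T] (via f ↦ -log_p ‖f‖), and conversely every pseudo-valuation on K[T] extends uniquely by continuity to a bounded multiplicative semi-norm on K⟨T⟩; these two maps are mutually inverse bijections. -/
open Polynomial Filter
open scoped Classical

/-- `v` is a pseudo-valuation on `K[T]` over the valuation `vK` on `K`. -/
def IsPseudoValuation {K : Type*} [Field K] (vK : K → EReal)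
    (v : Polynomial K → EReal) : Prop :=
  0 ≤ v X ∧
  (∀ f g : Polynomial K, min (v f) (v g) ≤ v (f + g)) ∧
  (∀ f g : Polynomial K, v (f * g) = v f + v g) ∧
  (∀ c : K, v (C c) = vK c)

/-- `f` lies in the Tate algebra `K⟨T⟩`: its coefficients tend to `0`
`p`-adically, i.e. their valuations tend to `∞`. -/
def IsTate {K : Type*} [Field K] (vK : K → EReal) (f : PowerSeries K) : Prop :=
  Tendsto (fun j : ℕ => vK (PowerSeries.coeff (R := K) j f)) atTop (nhds ⊤)

/-- The Gauss norm `‖Σ a_j T^j‖ = sup_j p^{-vK(a_j)}`. -/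
noncomputable def gaussNorm {K : Type*} [Field K] (p : ℕ) (vK : K → EReal)
    (f : PowerSeries K) : ℝ :=
  ⨆ j : ℕ, (if PowerSeries.coeff (R := K) j f = 0 then 0
    else (p : ℝ) ^ (-(vK (PowerSeries.coeff (R := K) j f)).toReal))

/-- `N` is a bounded multiplicative semi-norm on the Tate algebra `K⟨T⟩`
(realized as the subtype of Tate power series), whose restriction to `K` is
the norm `p^{-vK}`. -/
def IsBddMultSeminorm {K : Type*} [Field K] (p : ℕ) (vK : K → EReal)
    (N : {f : PowerSeries K // IsTate vK f} → ℝ) : Prop :=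
  (∀ f, 0 ≤ N f) ∧
  (∀ f : {f : PowerSeries K // IsTate vK f}, (f : PowerSeries K) = 1 → N f = 1) ∧
  (∀ f : {f : PowerSeries K // IsTate vK f}, (f : PowerSeries K) = 0 → N f = 0) ∧
  (∀ f g h : {f : PowerSeries K // IsTate vK f},
    (h : PowerSeries K) = (f : PowerSeries K) * g → N h = N f * N g) ∧
  (∀ f g h : {f : PowerSeries K // IsTate vK f},
    (h : PowerSeries K) = (f : PowerSeries K) + g → N h ≤ max (N f) (N g)) ∧
  (∀ f, N f ≤ gaussNorm p vK (f : PowerSeries K)) ∧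
  (∀ (f : {f : PowerSeries K // IsTate vK f}) (c : K), c ≠ 0 →
    (f : PowerSeries K) = PowerSeries.C (R := K) c → N f = (p : ℝ) ^ (-(vK c).toReal))

/-!
A pseudo-valuation `v` gives the ultrametric multiplicative seminorm `‖f‖_v = p^{-v(f)}` on
`K[T]`, and since `v(T) ≥ 0` it is bounded by the Gauss norm. Hence `‖trunc_n f‖_v` is Cauchy for a Tate series `f`, and its limit
extends `‖·‖_v` to `K⟨T⟩`; multiplicativity survives the limit because `trunc_n (f g)` and
`trunc_n f · trunc_n g` differ only by terms whose coefficients have valuation tending to `∞`.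
Conversely, a bounded seminorm `N` satisfies `|N f - N (trunc_n f)| ≤ ‖f - trunc_n f‖_Gauss → 0`,
so it is determined by its values on polynomials, where it is `p^{-v}` for `v = -log_p N`.
-/

open Topology

section

variable {K : Type*} [Field K]

structure IsEValuation (vK : K → EReal) : Prop where
  eq_top_iff : ∀ x, vK x = ⊤ ↔ x = 0
  ne_bot : ∀ x, vK x ≠ ⊥
  map_mul : ∀ x y, vK (x * y) = vK x + vK y
  min_le_map_add : ∀ x y, min (vK x) (vK y) ≤ vK (x + y)

abbrev TateSeries (vK : K → EReal) : Type _ := {f : PowerSeries K // IsTate vK f}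

namespace IsEValuation

variable {vK : K → EReal}

theorem map_zero (hvK : IsEValuation vK) : vK 0 = ⊤ := (hvK.eq_top_iff 0).2 rfl

theorem map_ne_top (hvK : IsEValuation vK) {x : K} (hx : x ≠ 0) : vK x ≠ ⊤ :=
  mt (hvK.eq_top_iff x).1 hx

theorem map_one (hvK : IsEValuation vK) : vK 1 = 0 := by
  have h := hvK.map_mul 1 1
  rw [one_mul] at h
  rw [← EReal.coe_toReal (hvK.map_ne_top one_ne_zero) (hvK.ne_bot 1)] at h ⊢
  norm_cast at h ⊢
  linarith

theorem map_neg_one (hvK : IsEValuation vK) : vK (-1) = 0 := by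
  have h := hvK.map_mul (-1) (-1)
  rw [neg_one_mul, neg_neg, hvK.map_one] at h
  rw [← EReal.coe_toReal (hvK.map_ne_top (neg_ne_zero.2 one_ne_zero)) (hvK.ne_bot (-1))] at h ⊢
  norm_cast at h ⊢
  linarith

theorem map_neg (hvK : IsEValuation vK) (x : K) : vK (-x) = vK x := by
  rw [← neg_one_mul, hvK.map_mul, hvK.map_neg_one, zero_add]

theorem le_map_sum (hvK : IsEValuation vK) {ι : Type*} (s : Finset ι) (a : ι → K) {B : EReal}
    (h : ∀ i ∈ s, B ≤ vK (a i)) : B ≤ vK (∑ i ∈ s, a i) := by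
  induction s using Finset.cons_induction with
  | empty => simp [hvK.map_zero]
  | cons i s hi ih =>
    rw [Finset.sum_cons]
    exact (le_min (h i (Finset.mem_cons_self i s))
      (ih fun j hj => h j (Finset.mem_cons_of_mem hj))).trans (hvK.min_le_map_add _ _)

theorem le_coeff_trunc (hvK : IsEValuation vK) {f : PowerSeries K} {c : EReal} {n i : ℕ}
    (h : c ≤ vK (PowerSeries.coeff i f)) : c ≤ vK ((PowerSeries.trunc n f).coeff i) := by
  rw [PowerSeries.coeff_trunc]
  split_ifs
  · exact h
  · rw [hvK.map_zero]; exact le_top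

end IsEValuation

end

section Scale

variable {p : ℕ}

noncomputable def normOfVal (p : ℕ) (e : EReal) : ℝ :=
  if e = ⊤ then 0 else (p : ℝ) ^ (-e.toReal)

noncomputable def valOfNorm (p : ℕ) (r : ℝ) : EReal :=
  if r = 0 then ⊤ else ((-Real.logb p r : ℝ) : EReal)

@[simp] theorem normOfVal_top : normOfVal p ⊤ = 0 := if_pos rfl

theorem normOfVal_of_ne_top {e : EReal} (h : e ≠ ⊤) : normOfVal p e = (p : ℝ) ^ (-e.toReal) :=
  if_neg h

@[simp] theorem normOfVal_coe (r : ℝ) : normOfVal p r = (p : ℝ) ^ (-r) := by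
  rw [normOfVal_of_ne_top (EReal.coe_ne_top r), EReal.toReal_coe]

@[simp] theorem normOfVal_zero : normOfVal p 0 = 1 := by
  rw [← EReal.coe_zero, normOfVal_coe, neg_zero, Real.rpow_zero]

theorem normOfVal_nonneg (e : EReal) : 0 ≤ normOfVal p e := by
  unfold normOfVal
  split_ifs
  · exact le_rfl
  · exact Real.rpow_nonneg (Nat.cast_nonneg p) _

theorem normOfVal_add (hp : 0 < (p : ℝ)) {a b : EReal} (ha : a ≠ ⊥) (hb : b ≠ ⊥) :
    normOfVal p (a + b) = normOfVal p a * normOfVal p b := by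
  rcases eq_or_ne a ⊤ with rfl | ha'
  · rw [EReal.top_add_of_ne_bot hb, normOfVal_top, zero_mul]
  rcases eq_or_ne b ⊤ with rfl | hb'
  · rw [EReal.add_top_of_ne_bot ha, normOfVal_top, mul_zero]
  lift a to ℝ using ⟨ha', ha⟩
  lift b to ℝ using ⟨hb', hb⟩
  rw [← EReal.coe_add, normOfVal_coe, normOfVal_coe, normOfVal_coe, neg_add, Real.rpow_add hp]

theorem normOfVal_anti (hp : 1 ≤ (p : ℝ)) {a b : EReal} (ha : a ≠ ⊥) (h : a ≤ b) :
    normOfVal p b ≤ normOfVal p a := by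
  rcases eq_or_ne b ⊤ with rfl | hb
  · rw [normOfVal_top]; exact normOfVal_nonneg a
  rw [normOfVal_of_ne_top hb, normOfVal_of_ne_top (h.trans_lt hb.lt_top).ne]
  exact Real.rpow_le_rpow_of_exponent_le hp (neg_le_neg (EReal.toReal_le_toReal h ha hb))

theorem normOfVal_le_rpow (hp : 1 ≤ (p : ℝ)) {M : ℝ} {e : EReal} (h : (M : EReal) ≤ e) :
    normOfVal p e ≤ (p : ℝ) ^ (-M) := by
  simpa using normOfVal_anti hp (EReal.coe_ne_bot M) h

theorem valOfNorm_normOfVal (hp : 1 < (p : ℝ)) {e : EReal} (h : e ≠ ⊥) :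
    valOfNorm p (normOfVal p e) = e := by
  rcases eq_or_ne e ⊤ with rfl | he
  · simp [valOfNorm]
  lift e to ℝ using ⟨he, h⟩
  rw [normOfVal_coe, valOfNorm, if_neg (Real.rpow_pos_of_pos (by linarith) _).ne',
    Real.logb_rpow (by linarith) hp.ne', neg_neg]

theorem normOfVal_valOfNorm (hp : 1 < (p : ℝ)) {r : ℝ} (hr : 0 ≤ r) :
    normOfVal p (valOfNorm p r) = r := by
  rcases eq_or_ne r 0 with rfl | hr0
  · simp [valOfNorm]
  rw [valOfNorm, if_neg hr0, normOfVal_coe, neg_neg,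
    Real.rpow_logb (by linarith) hp.ne' (hr.lt_of_ne' hr0)]

theorem valOfNorm_ne_bot (r : ℝ) : valOfNorm p r ≠ ⊥ := by
  unfold valOfNorm
  split_ifs <;> simp

@[simp] theorem valOfNorm_one : valOfNorm p 1 = 0 := by simp [valOfNorm]

theorem valOfNorm_mul (a b : ℝ) : valOfNorm p (a * b) = valOfNorm p a + valOfNorm p b := by
  rcases eq_or_ne a 0 with rfl | ha
  · rw [zero_mul, valOfNorm, if_pos rfl, EReal.top_add_of_ne_bot (valOfNorm_ne_bot b)]
  rcases eq_or_ne b 0 with rfl | hb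
  · rw [mul_zero, valOfNorm, if_pos rfl, EReal.add_top_of_ne_bot (valOfNorm_ne_bot a)]
  simp only [valOfNorm, if_neg (mul_ne_zero ha hb), if_neg ha, if_neg hb, Real.logb_mul ha hb,
    ← EReal.coe_add, neg_add]

theorem valOfNorm_anti (hp : 1 < (p : ℝ)) {a b : ℝ} (ha : 0 ≤ a) (h : a ≤ b) :
    valOfNorm p b ≤ valOfNorm p a := by
  rcases ha.eq_or_lt with rfl | ha
  · simp [valOfNorm]
  simp only [valOfNorm, if_neg (ha.trans_le h).ne', if_neg ha.ne', EReal.coe_le_coe_iff,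
    neg_le_neg_iff]
  exact (Real.logb_le_logb hp ha (ha.trans_le h)).2 h

theorem exists_rpow_neg_lt (hp : 1 < (p : ℝ)) {ε : ℝ} (hε : 0 < ε) :
    ∃ M : ℝ, (p : ℝ) ^ (-M) < ε := by
  refine ⟨-Real.logb p (ε / 2), ?_⟩
  rw [neg_neg, Real.rpow_logb (by linarith) hp.ne' (by linarith)]
  linarith

theorem tendsto_zero_of_eventually_le_rpow (hp : 1 < (p : ℝ)) {u : ℕ → ℝ}
    (hu : ∀ n, 0 ≤ u n)
    (h : ∀ M : ℝ, ∀ᶠ n in atTop, u n ≤ (p : ℝ) ^ (-M)) : Tendsto u atTop (𝓝 0) := by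
  refine tendsto_order.2 ⟨fun a ha => Eventually.of_forall fun n => ha.trans_le (hu n),
    fun ε hε => ?_⟩
  obtain ⟨M, hM⟩ := exists_rpow_neg_lt hp hε
  exact (h M).mono fun n hn => hn.trans_lt hM

end Scale

theorem abs_sub_le_of_le_max {x y c : ℝ} (hx : 0 ≤ x) (hy : 0 ≤ y) (hc : 0 ≤ c)
    (hxy : x ≤ max y c) (hyx : y ≤ max x c) : |x - y| ≤ c := by
  rw [abs_sub_le_iff]
  constructor
  · rcases le_max_iff.1 hxy with h | h <;> linarith
  · rcases le_max_iff.1 hyx with h | h <;> linarith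

theorem PowerSeries.coeff_trunc_mul_trunc {R : Type*} [Semiring R] (f g : PowerSeries R)
    {n j : ℕ} (hj : j < n) :
    (PowerSeries.trunc n f * PowerSeries.trunc n g).coeff j = PowerSeries.coeff j (f * g) := by
  rw [Polynomial.coeff_mul, PowerSeries.coeff_mul]
  refine Finset.sum_congr rfl fun x hx => ?_
  rw [Finset.HasAntidiagonal.mem_antidiagonal] at hx
  rw [PowerSeries.coeff_trunc, PowerSeries.coeff_trunc, if_pos (by omega), if_pos (by omega)]

section Tate

variable {K : Type*} [Field K] {vK : K → EReal} {p : ℕ}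

theorem isTate_coe (h0 : vK 0 = ⊤) (q : K[X]) : IsTate vK (q : PowerSeries K) := by
  refine tendsto_const_nhds.congr' ?_
  filter_upwards [eventually_gt_atTop q.natDegree] with j hj
  rw [Polynomial.coeff_coe, coeff_eq_zero_of_natDegree_lt hj, h0]

namespace IsTate

variable {f g : PowerSeries K}

theorem eventually_lt (hf : IsTate vK f) (M : ℝ) :
    ∀ᶠ j in atTop, (M : EReal) < vK (PowerSeries.coeff j f) :=
  hf (Ioi_mem_nhds (EReal.coe_lt_top M))

theorem exists_forall_le (hvK : IsEValuation vK) (hf : IsTate vK f) :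
    ∃ c : ℝ, ∀ j, (c : EReal) ≤ vK (PowerSeries.coeff j f) := by
  obtain ⟨n₀, hn₀⟩ := eventually_atTop.1 (hf.eventually_lt 0)
  set m := (Finset.range n₀).inf fun j => vK (PowerSeries.coeff j f)
  have hm : m ≠ ⊥ := ((Finset.lt_inf_iff bot_lt_top).2 fun j _ => (hvK.ne_bot _).bot_lt).ne'
  refine ⟨min 0 m.toReal, fun j => ?_⟩
  rcases lt_or_ge j n₀ with hj | hj
  · calc ((min 0 m.toReal : ℝ) : EReal) ≤ m.toReal := EReal.coe_le_coe_iff.2 (min_le_right _ _)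
      _ ≤ m := EReal.coe_toReal_le hm
      _ ≤ _ := Finset.inf_le (Finset.mem_range.2 hj)
  · exact (EReal.coe_le_coe_iff.2 (min_le_left _ _)).trans (hn₀ j hj).le

theorem neg (hvK : IsEValuation vK) (hf : IsTate vK f) : IsTate vK (-f) :=
  hf.congr fun j => by rw [map_neg, hvK.map_neg]

theorem sub_trunc (hf : IsTate vK f) (n : ℕ) : IsTate vK (f - PowerSeries.trunc n f) := by
  refine hf.congr' ?_
  filter_upwards [eventually_ge_atTop n] with j hj
  rw [map_sub, Polynomial.coeff_coe, PowerSeries.coeff_trunc, if_neg (by omega), sub_zero]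

theorem eventually_forall_le_coeff_sub_trunc (hvK : IsEValuation vK) (hf : IsTate vK f)
    (M : ℝ) : ∀ᶠ n in atTop, ∀ j,
      (M : EReal) ≤ vK (PowerSeries.coeff j (f - PowerSeries.trunc n f)) := by
  obtain ⟨n₀, hn₀⟩ := eventually_atTop.1 (hf.eventually_lt M)
  filter_upwards [eventually_ge_atTop n₀] with n hn j
  rw [map_sub, Polynomial.coeff_coe, PowerSeries.coeff_trunc]
  split_ifs with hj
  · rw [sub_self, hvK.map_zero]; exact le_top
  · rw [sub_zero]; exact (hn₀ j (by omega)).le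

/-- The coefficients of `trunc n (f g)` and `trunc n f * trunc n g` differ only in degrees
`j ≥ n`, where every product `a_i b_{j-i}` has `i ≥ n / 2` or `j - i ≥ n / 2`. -/
theorem eventually_forall_le_coeff_trunc_mul_sub (hvK : IsEValuation vK) (hf : IsTate vK f)
    (hg : IsTate vK g) (M : ℝ) : ∀ᶠ n in atTop, ∀ j, (M : EReal) ≤ vK
      ((PowerSeries.trunc n (f * g) - PowerSeries.trunc n f * PowerSeries.trunc n g).coeff j) := by
  obtain ⟨cf, hcf⟩ := hf.exists_forall_le hvK
  obtain ⟨cg, hcg⟩ := hg.exists_forall_le hvK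
  obtain ⟨n₁, hn₁⟩ := eventually_atTop.1
    ((hf.eventually_lt (M - cg)).and (hg.eventually_lt (M - cf)))
  filter_upwards [eventually_ge_atTop (2 * n₁)] with n hn j
  rw [Polynomial.coeff_sub, PowerSeries.coeff_trunc]
  split_ifs with hj
  · rw [PowerSeries.coeff_trunc_mul_trunc f g hj, sub_self, hvK.map_zero]
    exact le_top
  rw [zero_sub, hvK.map_neg, Polynomial.coeff_mul]
  refine hvK.le_map_sum _ _ fun x hx => ?_
  rw [Finset.HasAntidiagonal.mem_antidiagonal] at hx
  rw [hvK.map_mul]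
  rcases (by omega : n₁ ≤ x.1 ∨ n₁ ≤ x.2) with hx1 | hx2
  · calc (M : EReal) = ((M - cg : ℝ) : EReal) + (cg : EReal) := by
          rw [← EReal.coe_add, sub_add_cancel]
      _ ≤ _ := add_le_add (hvK.le_coeff_trunc (hn₁ x.1 hx1).1.le) (hvK.le_coeff_trunc (hcg x.2))
  · calc (M : EReal) = (cf : EReal) + ((M - cf : ℝ) : EReal) := by
          rw [← EReal.coe_add, add_sub_cancel]
      _ ≤ _ := add_le_add (hvK.le_coeff_trunc (hcf x.1)) (hvK.le_coeff_trunc (hn₁ x.2 hx2).2.le)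

end IsTate

theorem gaussNorm_nonneg (f : PowerSeries K) : 0 ≤ gaussNorm p vK f :=
  Real.iSup_nonneg fun j => by
    split_ifs
    · exact le_rfl
    · exact Real.rpow_nonneg (Nat.cast_nonneg p) _

theorem gaussNorm_eq_iSup (hvK : IsEValuation vK) (f : PowerSeries K) :
    gaussNorm p vK f = ⨆ j, normOfVal p (vK (PowerSeries.coeff j f)) := by
  refine iSup_congr fun j => ?_
  split_ifs with h
  · rw [h, hvK.map_zero, normOfVal_top]
  · rw [normOfVal_of_ne_top (hvK.map_ne_top h)]

theorem gaussNorm_le_rpow (hp : 1 ≤ (p : ℝ)) (hvK : IsEValuation vK) {f : PowerSeries K}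
    {M : ℝ} (h : ∀ j, (M : EReal) ≤ vK (PowerSeries.coeff j f)) :
    gaussNorm p vK f ≤ (p : ℝ) ^ (-M) := by
  rw [gaussNorm_eq_iSup hvK]
  exact ciSup_le fun j => normOfVal_le_rpow hp (h j)

theorem normOfVal_coeff_le_gaussNorm (hp : 1 ≤ (p : ℝ)) (hvK : IsEValuation vK)
    {f : PowerSeries K} (hf : IsTate vK f) (j : ℕ) :
    normOfVal p (vK (PowerSeries.coeff j f)) ≤ gaussNorm p vK f := by
  obtain ⟨c, hc⟩ := hf.exists_forall_le hvK
  rw [gaussNorm_eq_iSup hvK]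
  exact le_ciSup ⟨_, Set.forall_mem_range.2 fun i => normOfVal_le_rpow hp (hc i)⟩ j

theorem gaussNorm_coe_X_le_one (hvK : IsEValuation vK) :
    gaussNorm p vK ((X : K[X]) : PowerSeries K) ≤ 1 := by
  refine ciSup_le fun j => ?_
  rw [Polynomial.coeff_coe, coeff_X]
  split_ifs <;> simp_all [hvK.map_one]

theorem tendsto_gaussNorm_sub_trunc (hp : 1 < (p : ℝ)) (hvK : IsEValuation vK)
    {f : PowerSeries K} (hf : IsTate vK f) :
    Tendsto (fun n => gaussNorm p vK (f - PowerSeries.trunc n f)) atTop (𝓝 0) :=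
  tendsto_zero_of_eventually_le_rpow hp (fun _ => gaussNorm_nonneg _) fun M =>
    (hf.eventually_forall_le_coeff_sub_trunc hvK M).mono fun _ hn => gaussNorm_le_rpow hp.le hvK hn

end Tate

section Extension

variable {K : Type*} [Field K] {vK : K → EReal} {p : ℕ}

noncomputable def toTateSeminorm (p : ℕ) (vK : K → EReal) (v : K[X] → EReal)
    (f : TateSeries vK) : ℝ :=
  limUnder atTop fun n => normOfVal p (v (PowerSeries.trunc n f.1))

theorem toTateSeminorm_of_val_eq_coe (v : K[X] → EReal) {f : TateSeries vK} {q : K[X]}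
    (h : f.1 = q) : toTateSeminorm p vK v f = normOfVal p (v q) := by
  refine Tendsto.limUnder_eq (tendsto_const_nhds.congr' ?_)
  filter_upwards [eventually_gt_atTop q.natDegree] with n hn
  rw [h, PowerSeries.trunc_coe_eq_self hn]

namespace IsPseudoValuation

variable {v : K[X] → EReal}

theorem map_zero (hv : IsPseudoValuation vK v) (hvK : IsEValuation vK) : v 0 = ⊤ := by
  simpa [hvK.map_zero] using hv.2.2.2 0

theorem map_one (hv : IsPseudoValuation vK v) (hvK : IsEValuation vK) : v 1 = 0 := by
  simpa [hvK.map_one] using hv.2.2.2 1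

/-- In `EReal`, `⊥ + ⊤ = ⊥`, so `v f = ⊥` would contradict `v (f * 0) = v 0 = ⊤`. -/
theorem map_ne_bot (hv : IsPseudoValuation vK v) (hvK : IsEValuation vK) (f : K[X]) :
    v f ≠ ⊥ := fun h => by
  have h0 := hv.2.2.1 f 0
  rw [mul_zero, hv.map_zero hvK, h, EReal.bot_add] at h0
  exact top_ne_bot h0

theorem map_neg (hv : IsPseudoValuation vK v) (hvK : IsEValuation vK) (f : K[X]) :
    v (-f) = v f := by
  rw [← neg_one_mul, ← C_1, ← C_neg, hv.2.2.1, hv.2.2.2, hvK.map_neg_one, zero_add]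

theorem normOfVal_mul (hp : 0 < (p : ℝ)) (hv : IsPseudoValuation vK v) (hvK : IsEValuation vK)
    (f g : K[X]) : normOfVal p (v (f * g)) = normOfVal p (v f) * normOfVal p (v g) := by
  rw [hv.2.2.1, normOfVal_add hp (hv.map_ne_bot hvK f) (hv.map_ne_bot hvK g)]

theorem normOfVal_add_le (hp : 1 ≤ (p : ℝ)) (hv : IsPseudoValuation vK v)
    (hvK : IsEValuation vK) (f g : K[X]) :
    normOfVal p (v (f + g)) ≤ max (normOfVal p (v f)) (normOfVal p (v g)) := by
  rcases le_total (v f) (v g) with h | h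
  · exact le_max_of_le_left <| normOfVal_anti hp (hv.map_ne_bot hvK f)
      ((min_eq_left h).symm.trans_le (hv.2.1 f g))
  · exact le_max_of_le_right <| normOfVal_anti hp (hv.map_ne_bot hvK g)
      ((min_eq_right h).symm.trans_le (hv.2.1 f g))

theorem abs_normOfVal_sub_le (hp : 1 ≤ (p : ℝ)) (hv : IsPseudoValuation vK v)
    (hvK : IsEValuation vK) (f g : K[X]) :
    |normOfVal p (v f) - normOfVal p (v g)| ≤ normOfVal p (v (f - g)) := by
  refine abs_sub_le_of_le_max (normOfVal_nonneg _) (normOfVal_nonneg _) (normOfVal_nonneg _) ?_ ?_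
  · simpa using hv.normOfVal_add_le hp hvK g (f - g)
  · have h := hv.normOfVal_add_le hp hvK f (-(f - g))
    rwa [hv.map_neg hvK, show f + -(f - g) = g by ring] at h

theorem normOfVal_sum_le (hp : 1 ≤ (p : ℝ)) (hv : IsPseudoValuation vK v)
    (hvK : IsEValuation vK) {ι : Type*} (s : Finset ι) (a : ι → K[X]) {B : ℝ} (hB : 0 ≤ B)
    (h : ∀ i ∈ s, normOfVal p (v (a i)) ≤ B) : normOfVal p (v (∑ i ∈ s, a i)) ≤ B := by
  induction s using Finset.cons_induction with
  | empty => simpa [hv.map_zero hvK] using hB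
  | cons i s hi ih =>
    rw [Finset.sum_cons]
    exact (hv.normOfVal_add_le hp hvK _ _).trans (max_le (h i (Finset.mem_cons_self i s))
      (ih fun j hj => h j (Finset.mem_cons_of_mem hj)))

theorem zero_le_map_X_pow (hv : IsPseudoValuation vK v) (hvK : IsEValuation vK) (j : ℕ) :
    0 ≤ v (X ^ j) := by
  induction j with
  | zero => simp [hv.map_one hvK]
  | succ j ih => rw [pow_succ, hv.2.2.1]; exact add_nonneg ih hv.1

/-- `v (T) ≥ 0` makes `‖a T^j‖_v ≤ ‖a‖`. -/
theorem normOfVal_le_of_forall_coeff (hp : 1 ≤ (p : ℝ)) (hv : IsPseudoValuation vK v)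
    (hvK : IsEValuation vK) (q : K[X]) {B : ℝ} (hB : 0 ≤ B)
    (h : ∀ j, normOfVal p (vK (q.coeff j)) ≤ B) : normOfVal p (v q) ≤ B := by
  rw [q.as_sum_support]
  refine hv.normOfVal_sum_le hp hvK _ _ hB fun j _ => ?_
  have hXj : normOfVal p (v (X ^ j)) ≤ 1 :=
    (normOfVal_anti hp (by simp) (hv.zero_le_map_X_pow hvK j)).trans_eq normOfVal_zero
  rw [← C_mul_X_pow_eq_monomial, normOfVal_mul (by linarith) hv hvK, hv.2.2.2]
  exact (mul_le_of_le_one_right (normOfVal_nonneg _) hXj).trans (h j)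

theorem normOfVal_trunc_le_gaussNorm (hp : 1 ≤ (p : ℝ)) (hv : IsPseudoValuation vK v)
    (hvK : IsEValuation vK) {f : PowerSeries K} (hf : IsTate vK f) (n : ℕ) :
    normOfVal p (v (PowerSeries.trunc n f)) ≤ gaussNorm p vK f := by
  refine hv.normOfVal_le_of_forall_coeff hp hvK _ (gaussNorm_nonneg f) fun j => ?_
  rw [PowerSeries.coeff_trunc]
  split_ifs
  · exact normOfVal_coeff_le_gaussNorm hp hvK hf j
  · rw [hvK.map_zero, normOfVal_top]; exact gaussNorm_nonneg f

theorem normOfVal_le_rpow_of_coeff (hp : 1 ≤ (p : ℝ)) (hv : IsPseudoValuation vK v)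
    (hvK : IsEValuation vK) {q : K[X]} {M : ℝ} (h : ∀ j, (M : EReal) ≤ vK (q.coeff j)) :
    normOfVal p (v q) ≤ (p : ℝ) ^ (-M) :=
  hv.normOfVal_le_of_forall_coeff hp hvK q (Real.rpow_nonneg (Nat.cast_nonneg p) _)
    fun j => normOfVal_le_rpow hp (h j)

theorem cauchySeq_normOfVal_trunc (hp : 1 < (p : ℝ)) (hv : IsPseudoValuation vK v)
    (hvK : IsEValuation vK) {f : PowerSeries K} (hf : IsTate vK f) :
    CauchySeq fun n => normOfVal p (v (PowerSeries.trunc n f)) := by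
  refine Metric.cauchySeq_iff'.2 fun ε hε => ?_
  obtain ⟨M, hM⟩ := exists_rpow_neg_lt hp hε
  obtain ⟨N, hN⟩ := eventually_atTop.1 (hf.eventually_forall_le_coeff_sub_trunc hvK M)
  refine ⟨N, fun n hn => ?_⟩
  have htrunc : PowerSeries.trunc n f - PowerSeries.trunc N f =
      PowerSeries.trunc n (f - (PowerSeries.trunc N f : PowerSeries K)) := by
    ext j
    simp only [Polynomial.coeff_sub, PowerSeries.coeff_trunc, map_sub, Polynomial.coeff_coe]
    split_ifs <;> first | omega | simp
  rw [Real.dist_eq]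
  refine ((hv.abs_normOfVal_sub_le hp.le hvK _ _).trans ?_).trans_lt hM
  rw [htrunc]
  exact hv.normOfVal_le_rpow_of_coeff hp.le hvK fun j => hvK.le_coeff_trunc (hN N le_rfl j)

theorem tendsto_toTateSeminorm (hp : 1 < (p : ℝ)) (hv : IsPseudoValuation vK v)
    (hvK : IsEValuation vK) (f : TateSeries vK) :
    Tendsto (fun n => normOfVal p (v (PowerSeries.trunc n f.1))) atTop
      (𝓝 (toTateSeminorm p vK v f)) :=
  (hv.cauchySeq_normOfVal_trunc hp hvK f.2).tendsto_limUnder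

theorem toTateSeminorm_mul (hp : 1 < (p : ℝ)) (hv : IsPseudoValuation vK v)
    (hvK : IsEValuation vK) (f g h : TateSeries vK) (hh : h.1 = f.1 * g.1) :
    toTateSeminorm p vK v h = toTateSeminorm p vK v f * toTateSeminorm p vK v g := by
  have hdiff : Tendsto (fun n => normOfVal p (v (PowerSeries.trunc n h.1)) -
      normOfVal p (v (PowerSeries.trunc n f.1)) * normOfVal p (v (PowerSeries.trunc n g.1)))
      atTop (𝓝 0) := by
    refine squeeze_zero_norm (fun n => ?_) <| tendsto_zero_of_eventually_le_rpow hp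
      (fun _ => normOfVal_nonneg _) fun M =>
        (f.2.eventually_forall_le_coeff_trunc_mul_sub hvK g.2 M).mono fun _ hn =>
          hv.normOfVal_le_rpow_of_coeff hp.le hvK hn
    rw [Real.norm_eq_abs, ← hv.normOfVal_mul (by linarith) hvK, hh]
    exact hv.abs_normOfVal_sub_le hp.le hvK _ _
  refine tendsto_nhds_unique (hv.tendsto_toTateSeminorm hp hvK h) ?_
  simpa using hdiff.add ((hv.tendsto_toTateSeminorm hp hvK f).mul
    (hv.tendsto_toTateSeminorm hp hvK g))

theorem isBddMultSeminorm_toTateSeminorm (hp : 1 < (p : ℝ)) (hv : IsPseudoValuation vK v)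
    (hvK : IsEValuation vK) : IsBddMultSeminorm p vK (toTateSeminorm p vK v) := by
  refine ⟨fun f => ge_of_tendsto' (hv.tendsto_toTateSeminorm hp hvK f)
      fun n => normOfVal_nonneg _,
    fun f h => ?_, fun f h => ?_, hv.toTateSeminorm_mul hp hvK,
    fun f g h hh => le_of_tendsto_of_tendsto' (hv.tendsto_toTateSeminorm hp hvK h)
      ((hv.tendsto_toTateSeminorm hp hvK f).max (hv.tendsto_toTateSeminorm hp hvK g))
      fun n => by rw [hh, map_add]; exact hv.normOfVal_add_le hp.le hvK _ _,
    fun f => le_of_tendsto' (hv.tendsto_toTateSeminorm hp hvK f)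
      (hv.normOfVal_trunc_le_gaussNorm hp.le hvK f.2),
    fun f c hc h => ?_⟩
  · rw [toTateSeminorm_of_val_eq_coe v (h.trans Polynomial.coe_one.symm), hv.map_one hvK,
      normOfVal_zero]
  · rw [toTateSeminorm_of_val_eq_coe v (h.trans Polynomial.coe_zero.symm), hv.map_zero hvK,
      normOfVal_top]
  · rw [toTateSeminorm_of_val_eq_coe v (h.trans (Polynomial.coe_C c).symm), hv.2.2.2,
      normOfVal_of_ne_top (hvK.map_ne_top hc)]

end IsPseudoValuation

end Extension

section Restriction

variable {K : Type*} [Field K] {vK : K → EReal} {p : ℕ}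

noncomputable def toPseudoValuation (p : ℕ) (h0 : vK 0 = ⊤) (N : TateSeries vK → ℝ)
    (f : K[X]) : EReal :=
  valOfNorm p (N ⟨f, isTate_coe h0 f⟩)

namespace IsBddMultSeminorm

variable {N : TateSeries vK → ℝ}

theorem nonneg (hN : IsBddMultSeminorm p vK N) (f : TateSeries vK) : 0 ≤ N f := hN.1 f

theorem map_add_le (hN : IsBddMultSeminorm p vK N) {f g h : TateSeries vK}
    (hh : h.1 = f.1 + g.1) : N h ≤ max (N f) (N g) :=
  hN.2.2.2.2.1 f g h hh

theorem map_coe_C (hN : IsBddMultSeminorm p vK N) (hvK : IsEValuation vK) (c : K) :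
    N ⟨C c, isTate_coe hvK.map_zero _⟩ = normOfVal p (vK c) := by
  rcases eq_or_ne c 0 with rfl | hc
  · rw [hvK.map_zero, normOfVal_top]
    exact hN.2.2.1 _ (by simp)
  · rw [normOfVal_of_ne_top (hvK.map_ne_top hc)]
    exact hN.2.2.2.2.2.2 _ c hc (Polynomial.coe_C c)

theorem map_neg (hN : IsBddMultSeminorm p vK N) (hvK : IsEValuation vK) {f g : TateSeries vK}
    (hfg : f.1 = -g.1) : N f = N g := by
  have hmul := hN.2.2.2.1 ⟨_, isTate_coe hvK.map_zero (C (-1))⟩ g f (by simp [hfg])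
  rwa [hN.map_coe_C hvK, hvK.map_neg_one, normOfVal_zero, one_mul] at hmul

theorem abs_sub_le_gaussNorm (hN : IsBddMultSeminorm p vK N) (hvK : IsEValuation vK)
    (f g : TateSeries vK) (hfg : IsTate vK (f.1 - g.1)) :
    |N f - N g| ≤ gaussNorm p vK (f.1 - g.1) := by
  refine (abs_sub_le_of_le_max (hN.nonneg f) (hN.nonneg g) (hN.nonneg ⟨_, hfg⟩)
    (hN.map_add_le (g := ⟨_, hfg⟩) (add_sub_cancel g.1 f.1).symm) ?_).trans (hN.2.2.2.2.2.1 _)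
  have hgf := hN.map_add_le (f := f) (g := ⟨_, hfg.neg hvK⟩) (h := g) (by simp)
  rwa [hN.map_neg hvK (f := ⟨_, hfg.neg hvK⟩) (g := ⟨_, hfg⟩) rfl] at hgf

theorem tendsto_trunc (hp : 1 < (p : ℝ)) (hN : IsBddMultSeminorm p vK N) (hvK : IsEValuation vK)
    (f : TateSeries vK) :
    Tendsto (fun n => N ⟨PowerSeries.trunc n f.1, isTate_coe hvK.map_zero _⟩) atTop
      (𝓝 (N f)) := by
  have hdiff : Tendsto (fun n => N ⟨PowerSeries.trunc n f.1, isTate_coe hvK.map_zero _⟩ - N f)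
      atTop (𝓝 0) :=
    squeeze_zero_norm (fun n => by
      rw [Real.norm_eq_abs, abs_sub_comm]
      exact hN.abs_sub_le_gaussNorm hvK f _ (f.2.sub_trunc n))
      (tendsto_gaussNorm_sub_trunc hp hvK f.2)
  simpa using hdiff.add_const (N f)

theorem eq_of_forall_coe (hp : 1 < (p : ℝ)) (hvK : IsEValuation vK) {N' : TateSeries vK → ℝ}
    (hN : IsBddMultSeminorm p vK N) (hN' : IsBddMultSeminorm p vK N')
    (h : ∀ (q : K[X]) (hq : IsTate vK (q : PowerSeries K)), N ⟨q, hq⟩ = N' ⟨q, hq⟩) :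
    N = N' :=
  funext fun f => tendsto_nhds_unique (hN.tendsto_trunc hp hvK f)
    ((hN'.tendsto_trunc hp hvK f).congr fun _ => (h _ _).symm)

theorem isPseudoValuation_toPseudoValuation (hp : 1 < (p : ℝ)) (hN : IsBddMultSeminorm p vK N)
    (hvK : IsEValuation vK) : IsPseudoValuation vK (toPseudoValuation p hvK.map_zero N) := by
  refine ⟨?_, fun f g => ?_, fun f g => ?_, fun c => ?_⟩
  · rw [← valOfNorm_one (p := p)]
    exact valOfNorm_anti hp (hN.nonneg _)
      ((hN.2.2.2.2.2.1 _).trans (gaussNorm_coe_X_le_one hvK))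
  · have hfg := hN.map_add_le (f := ⟨f, isTate_coe hvK.map_zero f⟩)
      (g := ⟨g, isTate_coe hvK.map_zero g⟩) (h := ⟨↑(f + g), isTate_coe hvK.map_zero _⟩)
      (Polynomial.coe_add f g)
    rcases le_total (N ⟨f, isTate_coe hvK.map_zero f⟩) (N ⟨g, isTate_coe hvK.map_zero g⟩)
      with h | h
    · rw [max_eq_right h] at hfg
      exact min_le_of_right_le (valOfNorm_anti hp (hN.nonneg _) hfg)
    · rw [max_eq_left h] at hfg
      exact min_le_of_left_le (valOfNorm_anti hp (hN.nonneg _) hfg)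
  · rw [toPseudoValuation, toPseudoValuation, toPseudoValuation, ← valOfNorm_mul]
    exact congrArg (valOfNorm p) (hN.2.2.2.1 _ _ _ (Polynomial.coe_mul f g))
  · rw [toPseudoValuation, hN.map_coe_C hvK, valOfNorm_normOfVal hp (hvK.ne_bot c)]

theorem toTateSeminorm_toPseudoValuation (hp : 1 < (p : ℝ)) (hN : IsBddMultSeminorm p vK N)
    (hvK : IsEValuation vK) : toTateSeminorm p vK (toPseudoValuation p hvK.map_zero N) = N :=
  ((hN.isPseudoValuation_toPseudoValuation hp hvK).isBddMultSeminorm_toTateSeminorm hp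
    hvK).eq_of_forall_coe hp hvK hN fun q _ => by
      rw [toTateSeminorm_of_val_eq_coe _ rfl, toPseudoValuation,
        normOfVal_valOfNorm hp (hN.nonneg _)]

end IsBddMultSeminorm

theorem IsPseudoValuation.toPseudoValuation_toTateSeminorm (hp : 1 < (p : ℝ))
    {v : K[X] → EReal} (hv : IsPseudoValuation vK v) (hvK : IsEValuation vK) :
    toPseudoValuation p hvK.map_zero (toTateSeminorm p vK v) = v :=
  funext fun f => by
    rw [toPseudoValuation, toTateSeminorm_of_val_eq_coe v rfl,
      valOfNorm_normOfVal hp (hv.map_ne_bot hvK f)]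

end Restriction

theorem stmt4_general (p : ℕ) [Fact p.Prime] (K : Type*) [Field K]
    (vK : K → EReal)
    (hK0 : ∀ x : K, vK x = ⊤ ↔ x = 0)
    (hKbot : ∀ x : K, vK x ≠ ⊥)
    (hKmul : ∀ x y : K, vK (x * y) = vK x + vK y)
    (hKadd : ∀ x y : K, min (vK x) (vK y) ≤ vK (x + y)) :
    ∃ Φ : {N : {f : PowerSeries K // IsTate vK f} → ℝ // IsBddMultSeminorm p vK N} →
          {v : Polynomial K → EReal // IsPseudoValuation vK v},
    ∃ Ψ : {v : Polynomial K → EReal // IsPseudoValuation vK v} →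
          {N : {f : PowerSeries K // IsTate vK f} → ℝ // IsBddMultSeminorm p vK N},
      (∀ N (f : Polynomial K) (hf : IsTate vK (f : PowerSeries K)),
        (Φ N).val f =
          if N.val ⟨(f : PowerSeries K), hf⟩ = 0 then (⊤ : EReal)
          else ((-Real.logb p (N.val ⟨(f : PowerSeries K), hf⟩) : ℝ) : EReal)) ∧
      Function.LeftInverse Ψ Φ ∧
      Function.RightInverse Ψ Φ ∧
      (∀ N N' : {N : {f : PowerSeries K // IsTate vK f} → ℝ // IsBddMultSeminorm p vK N},
        (∀ (f : Polynomial K) (hf : IsTate vK (f : PowerSeries K)),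
          N.val ⟨(f : PowerSeries K), hf⟩ = N'.val ⟨(f : PowerSeries K), hf⟩) →
        N = N') := by
  have hp : 1 < (p : ℝ) := by exact_mod_cast (Fact.out : p.Prime).one_lt
  have hvK : IsEValuation vK := ⟨hK0, hKbot, hKmul, hKadd⟩
  refine ⟨fun N => ⟨toPseudoValuation p hvK.map_zero N.1,
      N.2.isPseudoValuation_toPseudoValuation hp hvK⟩,
    fun v => ⟨toTateSeminorm p vK v.1, v.2.isBddMultSeminorm_toTateSeminorm hp hvK⟩,
    fun N f hf => rfl,
    fun N => Subtype.ext (N.2.toTateSeminorm_toPseudoValuation hp hvK),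
    fun v => Subtype.ext (v.2.toPseudoValuation_toTateSeminorm hp hvK),
    fun N N' h => Subtype.ext (N.2.eq_of_forall_coe hp hvK N'.2 h)⟩

/-- Pseudo-valuations on `K[T]` correspond bijectively to bounded
multiplicative semi-norms on the Tate algebra `K⟨T⟩`: every such semi-norm
restricts, via `f ↦ -log_p ‖f‖`, to a pseudo-valuation on `K[T]`; conversely
every pseudo-valuation extends uniquely by continuity (agreement on the dense
subring of polynomials determines the semi-norm) to a bounded multiplicative
semi-norm, and these two maps are mutually inverse bijections. -/
theorem stmt4 (p : ℕ) [Fact p.Prime] (K : Type*) [Field K] [Algebra ℚ_[p] K]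
    [FiniteDimensional ℚ_[p] K]
    (vK : K → EReal)
    (hK0 : ∀ x : K, vK x = ⊤ ↔ x = 0)
    (hKbot : ∀ x : K, vK x ≠ ⊥)
    (hKmul : ∀ x y : K, vK (x * y) = vK x + vK y)
    (hKadd : ∀ x y : K, min (vK x) (vK y) ≤ vK (x + y))
    (hKp : vK ((p : ℚ_[p]) • (1 : K)) = 1) :
    ∃ Φ : {N : {f : PowerSeries K // IsTate vK f} → ℝ // IsBddMultSeminorm p vK N} →
          {v : Polynomial K → EReal // IsPseudoValuation vK v},
    ∃ Ψ : {v : Polynomial K → EReal // IsPseudoValuation vK v} →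
          {N : {f : PowerSeries K // IsTate vK f} → ℝ // IsBddMultSeminorm p vK N},
      (∀ N (f : Polynomial K) (hf : IsTate vK (f : PowerSeries K)),
        (Φ N).val f =
          if N.val ⟨(f : PowerSeries K), hf⟩ = 0 then (⊤ : EReal)
          else ((-Real.logb p (N.val ⟨(f : PowerSeries K), hf⟩) : ℝ) : EReal)) ∧
      Function.LeftInverse Ψ Φ ∧
      Function.RightInverse Ψ Φ ∧
      (∀ N N' : {N : {f : PowerSeries K // IsTate vK f} → ℝ // IsBddMultSeminorm p vK N},
        (∀ (f : Polynomial K) (hf : IsTate vK (f : PowerSeries K)),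
          N.val ⟨(f : PowerSeries K), hf⟩ = N'.val ⟨(f : PowerSeries K), hf⟩) →
        N = N') :=
  stmt4_general p K vK hK0 hKbot hKmul hKadd
end

section
/- Let p ≥ 3 be a prime and n ≥ 2 an integer. The rational numbers k/(p^{n-1}(p-1)) - (k-t)/p^n - t/p^{n+1} (for integers 1 ≤ k ≤ 2p-1, 0 ≤ t ≤ k) are less than 2/(p^{n-1}(p-1)) if and only if: t ∈ {0,1} when k ≤ p+1 and k ∉ {2,3}; t ∈ {0,1,2} when k ∈ {2,3}; and t = 0 when p+2 ≤ k ≤ 2p-1. -/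
/-!
Multiplying by `p^{n+1}(p-1)` turns the inequality into `k p + t (p-1)^2 < 2 p^2`, which no longer
involves `n`. For `t = 0` this is `k < 2p`; for `t = 1` it is `k p < p^2 + 2p - 1`, i.e. `k ≤ p + 1`;
for `t = 2` it is `k p < 4p - 2`, i.e. `k ≤ 3`; and for `t ≥ 3` it fails, since then `k ≥ 3` and
`3p + 3(p-1)^2 ≥ 2p^2`.
-/

theorem truncation_lt_iff_mul_lt {K : Type*} [Field K] [LinearOrder K] [IsStrictOrderedRing K]
    {p q k t : K} (hq : 0 < q) (hp : 1 < p) :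
    k / (q * (p - 1)) - (k - t) / (q * p) - t / (q * p ^ 2) < 2 / (q * (p - 1)) ↔
      k * p + t * (p - 1) ^ 2 < 2 * p ^ 2 := by
  have hp0 : 0 < p := by linarith
  have hp1 : 0 < p - 1 := by linarith
  have hc : 0 < q * (p - 1) * p ^ 2 := by positivity
  rw [← mul_lt_mul_iff_left₀ hc]
  convert Iff.rfl using 2
  · field_simp
    ring
  · field_simp

def truncWeight (p k t : ℕ) : ℕ := k * p + t * (p - 1) ^ 2

section truncWeight

variable {p k t : ℕ}

theorem truncWeight_zero_lt_iff (hp : 0 < p) : truncWeight p k 0 < 2 * p ^ 2 ↔ k < 2 * p := by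
  rw [truncWeight, zero_mul, add_zero, sq, ← mul_assoc]
  exact Nat.mul_lt_mul_right hp

theorem truncWeight_one_lt_iff (hp : 2 ≤ p) : truncWeight p k 1 < 2 * p ^ 2 ↔ k ≤ p + 1 := by
  obtain ⟨m, rfl⟩ : ∃ m, p = m + 1 := ⟨p - 1, by omega⟩
  rw [truncWeight, Nat.add_sub_cancel, one_mul]
  constructor
  · intro h
    by_contra! hk
    nlinarith
  · intro hk
    nlinarith

theorem truncWeight_two_lt_iff (hp : 3 ≤ p) : truncWeight p k 2 < 2 * p ^ 2 ↔ k ≤ 3 := by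
  obtain ⟨m, rfl⟩ : ∃ m, p = m + 1 := ⟨p - 1, by omega⟩
  rw [truncWeight, Nat.add_sub_cancel]
  constructor
  · intro h
    by_contra! hk
    nlinarith
  · intro hk
    nlinarith

theorem two_mul_sq_le_truncWeight (ht : 3 ≤ t) (htk : t ≤ k) : 2 * p ^ 2 ≤ truncWeight p k t := by
  rcases Nat.eq_zero_or_pos p with rfl | hp
  · simp
  obtain ⟨m, rfl⟩ : ∃ m, p = m + 1 := ⟨p - 1, by omega⟩
  rw [truncWeight, Nat.add_sub_cancel]
  nlinarith [Nat.mul_le_mul_right (m + 1) (ht.trans htk), Nat.mul_le_mul_right (m ^ 2) ht]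

theorem truncWeight_lt_iff (hp : 3 ≤ p) (hk : k ≤ 2 * p - 1) (ht : t ≤ k) :
    truncWeight p k t < 2 * p ^ 2 ↔
      ((k = 2 ∨ k = 3) ∧ t ≤ 2) ∨ (k ≤ p + 1 ∧ k ≠ 2 ∧ k ≠ 3 ∧ t ≤ 1) ∨ (p + 2 ≤ k ∧ t = 0) := by
  match t, ht with
  | 0, _ => rw [truncWeight_zero_lt_iff (by omega)]; omega
  | 1, _ => rw [truncWeight_one_lt_iff (by omega)]; omega
  | 2, _ => rw [truncWeight_two_lt_iff hp]; omega
  | t + 3, ht => exact iff_of_false (two_mul_sq_le_truncWeight (by omega) ht).not_gt (by omega)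

end truncWeight

theorem stmt11_general (p n : ℕ) (hp3 : 3 ≤ p) (hn : 2 ≤ n)
    (k t : ℕ) (hk : k ≤ 2 * p - 1) (ht : t ≤ k) :
    ((k : ℚ) / ((p : ℚ) ^ (n - 1) * ((p : ℚ) - 1)) - ((k : ℚ) - (t : ℚ)) / (p : ℚ) ^ n
        - (t : ℚ) / (p : ℚ) ^ (n + 1) < 2 / ((p : ℚ) ^ (n - 1) * ((p : ℚ) - 1)))
      ↔ (((k = 2 ∨ k = 3) ∧ t ≤ 2) ∨
         (k ≤ p + 1 ∧ k ≠ 2 ∧ k ≠ 3 ∧ t ≤ 1) ∨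
         (p + 2 ≤ k ∧ t = 0)) := by
  have hp : (1 : ℚ) < p := by exact_mod_cast (by omega : 1 < p)
  have hpow : (p : ℚ) ^ n = p ^ (n - 1) * p ∧ (p : ℚ) ^ (n + 1) = p ^ (n - 1) * p ^ 2 := by
    constructor
    · rw [← pow_succ, Nat.sub_add_cancel (by omega)]
    · rw [← pow_add]; congr 1; omega
  rw [hpow.1, hpow.2, truncation_lt_iff_mul_lt (by positivity) hp, ← truncWeight_lt_iff hp3 hk ht,
    truncWeight]
  have hsub : ((p - 1 : ℕ) : ℚ) = p - 1 := by rw [Nat.cast_sub (by omega), Nat.cast_one]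
  rw [← hsub]
  exact_mod_cast Iff.rfl

/-- Truncation inequality classification: for a prime `p ≥ 3`, `n ≥ 2`,
`1 ≤ k ≤ 2p-1` and `0 ≤ t ≤ k`, the exponent
`k/(p^{n-1}(p-1)) - (k-t)/p^n - t/p^{n+1}` is `< 2/(p^{n-1}(p-1))` iff
`t ≤ 1` when `k ≤ p+1`, `k ∉ {2,3}`; `t ≤ 2` when `k ∈ {2,3}`; `t = 0` when
`p+2 ≤ k ≤ 2p-1`. -/
theorem stmt11 (p n : ℕ) (hp : p.Prime) (hp3 : 3 ≤ p) (hn : 2 ≤ n)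
    (k t : ℕ) (hk1 : 1 ≤ k) (hk : k ≤ 2 * p - 1) (ht : t ≤ k) :
    ((k : ℚ) / ((p : ℚ) ^ (n - 1) * ((p : ℚ) - 1)) - ((k : ℚ) - (t : ℚ)) / (p : ℚ) ^ n
        - (t : ℚ) / (p : ℚ) ^ (n + 1) < 2 / ((p : ℚ) ^ (n - 1) * ((p : ℚ) - 1)))
      ↔ (((k = 2 ∨ k = 3) ∧ t ≤ 2) ∨
         (k ≤ p + 1 ∧ k ≠ 2 ∧ k ≠ 3 ∧ t ≤ 1) ∨
         (p + 2 ≤ k ∧ t = 0)) :=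
  stmt11_general p n hp3 hn k t hk ht
end
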